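/- Let 𝔛 be a complete class of finite groups and G a finite group. Then k_𝔛(G) = 1 if and only if h_𝔛(G) = 1 and every 𝔛-maximal subgroup of G is a Hall 𝔛-subgroup of G. -/

import Mathlib

open scoped Pointwise

/-- A class of (finite) groups, given as a property of group types. -/
abbrev GroupClass : Type 1 := ∀ (G : Type) [Group G], Prop

/-- A complete class of finite groups: nonempty, closed under isomorphism,
subgroups, homomorphic images, and extensions. -/
def IsCompleteClass (X : GroupClass) : Prop :=
  (∃ (G : Type) (inst : Group G), Finite G ∧ @X G inst) ∧
  (∀ (G H : Type) [Group G] [Group H] [Finite G], (G ≃* H) → X G → X H) ∧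
  (∀ (G : Type) [Group G] [Finite G], X G → ∀ H : Subgroup G, X ↥H) ∧
  (∀ (G H : Type) [Group G] [Group H] [Finite G] (φ : G →* H),
      Function.Surjective φ → X G → X H) ∧
  (∀ (G : Type) [Group G] [Finite G] (N : Subgroup G) [N.Normal],
      X ↥N → X (G ⧸ N) → X G)

/-- The conjugate `g H g⁻¹` of a subgroup. -/
def conjSub {G : Type} [Group G] (g : G) (H : Subgroup G) : Subgroup G :=
  H.map (MulAut.conj g).toMonoidHom

/-- The number of conjugacy classes meeting a (conjugation-invariant) set of subgroups. -/
noncomputable def numClasses {G : Type} [Group G] (S : Set (Subgroup G)) : ℕ :=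
  Nat.card {C : Set (Subgroup G) // ∃ H ∈ S, C = {K | ∃ g : G, K = conjSub g H}}

/-- An `𝔛`-maximal subgroup: an `𝔛`-subgroup maximal under inclusion among
`𝔛`-subgroups. -/
def IsXMaximal (X : GroupClass) {G : Type} [Group G] (H : Subgroup G) : Prop :=
  X ↥H ∧ ∀ K : Subgroup G, X ↥K → H ≤ K → H = K

/-- `k_𝔛(G)`: the number of conjugacy classes of `𝔛`-maximal subgroups of `G`. -/
noncomputable def kX (X : GroupClass) (G : Type) [Group G] : ℕ :=
  numClasses {H : Subgroup G | IsXMaximal X H}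

/-- `π(𝔛)`: the set of primes dividing the order of some finite `𝔛`-group. -/
def piX (X : GroupClass) : Set ℕ :=
  {p | p.Prime ∧ ∃ (G : Type) (inst : Group G), Finite G ∧ @X G inst ∧ p ∣ Nat.card G}

/-- A Hall `𝔛`-subgroup: an `𝔛`-subgroup whose index is divisible by no prime
in `π(𝔛)`. -/
def IsHallX (X : GroupClass) {G : Type} [Group G] (H : Subgroup G) : Prop :=
  X ↥H ∧ ∀ p ∈ piX X, ¬ p ∣ H.index

/-- `h_𝔛(G)`: the number of conjugacy classes of Hall `𝔛`-subgroups of `G`. -/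
noncomputable def hX (X : GroupClass) (G : Type) [Group G] : ℕ :=
  numClasses {H : Subgroup G | IsHallX X H}

/-!
A Hall `𝔛`-subgroup is always `𝔛`-maximal: an `𝔛`-subgroup `K ≥ H` has `|K : H|` dividing both
`|K|` (a `π(𝔛)`-number) and `|G : H|` (a `π(𝔛)'`-number). Conversely, by completeness every
`p`-group with `p ∈ π(𝔛)` lies in `𝔛` (it is an iterated extension of groups of order `p`), so a
Sylow `p`-subgroup of `G` lies in some `𝔛`-maximal subgroup `M`, whose index is then prime to `p`.
If all `𝔛`-maximal subgroups are conjugate, they all have the index of `M`, hence are Hall. In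
either direction the Hall `𝔛`-subgroups and the `𝔛`-maximal subgroups are then the same set.
-/

section Conjugation

variable {G : Type} [Group G]

theorem conjSub_eq_smul (g : G) (H : Subgroup G) : conjSub g H = MulAut.conj g • H := rfl

theorem conjSub_one (H : Subgroup G) : conjSub 1 H = H := by
  simp only [conjSub_eq_smul, map_one, one_smul]

theorem conjSub_mul (a b : G) (H : Subgroup G) :
    conjSub (a * b) H = conjSub a (conjSub b H) := by
  simp only [conjSub_eq_smul, map_mul, mul_smul]

theorem index_conjSub (g : G) (H : Subgroup G) : (conjSub g H).index = H.index :=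
  H.index_map_equiv (MulAut.conj g)

def conjClass (H : Subgroup G) : Set (Subgroup G) := {K | ∃ g : G, K = conjSub g H}

theorem self_mem_conjClass (H : Subgroup G) : H ∈ conjClass H := ⟨1, (conjSub_one H).symm⟩

theorem conjClass_conjSub (g : G) (H : Subgroup G) : conjClass (conjSub g H) = conjClass H := by
  ext K
  constructor
  · rintro ⟨a, rfl⟩
    exact ⟨a * g, (conjSub_mul a g H).symm⟩
  · rintro ⟨a, rfl⟩
    exact ⟨a * g⁻¹, by rw [← conjSub_mul, inv_mul_cancel_right]⟩

theorem numClasses_eq_one_iff (S : Set (Subgroup G)) :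
    numClasses S = 1 ↔ S.Nonempty ∧ ∀ H ∈ S, ∀ K ∈ S, ∃ g : G, K = conjSub g H := by
  rw [numClasses, Nat.card_eq_one_iff_unique]
  constructor
  · rintro ⟨hsub, ⟨_, H, hH, -⟩⟩
    refine ⟨⟨H, hH⟩, fun H₁ h₁ K₁ k₁ => ?_⟩
    have hclass : conjClass H₁ = conjClass K₁ :=
      congrArg Subtype.val (hsub.allEq ⟨conjClass H₁, H₁, h₁, rfl⟩ ⟨conjClass K₁, K₁, k₁, rfl⟩)
    show K₁ ∈ conjClass H₁
    exact hclass ▸ self_mem_conjClass K₁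
  · rintro ⟨⟨H, hH⟩, hconj⟩
    refine ⟨⟨?_⟩, ⟨⟨conjClass H, H, hH, rfl⟩⟩⟩
    rintro ⟨_, H₁, h₁, rfl⟩ ⟨_, H₂, h₂, rfl⟩
    obtain ⟨g, rfl⟩ := hconj H₁ h₁ H₂ h₂
    exact Subtype.ext (conjClass_conjSub g H₁).symm

end Conjugation

section Maximal

variable {X : GroupClass} {G : Type} [Group G] [Finite G]

theorem IsHallX.isXMaximal {H : Subgroup G} (hH : IsHallX X H) : IsXMaximal X H := by
  refine ⟨hH.1, fun K hK hHK => le_antisymm hHK (Subgroup.relIndex_eq_one.mp ?_)⟩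
  by_contra hne
  obtain ⟨p, hp, hpH⟩ := Nat.exists_prime_and_dvd hne
  have hpK : p ∈ piX X := ⟨hp, K, _, inferInstance, hK, hpH.trans (H.subgroupOf K).index_dvd_card⟩
  exact hH.2 p hpK (hpH.trans (Subgroup.relIndex_dvd_index_of_le hHK))

theorem exists_le_isXMaximal {H : Subgroup G} (hH : X H) :
    ∃ M : Subgroup G, IsXMaximal X M ∧ H ≤ M := by
  obtain ⟨M, hHM, hM⟩ := (Set.toFinite {K : Subgroup G | X K}).exists_le_maximal hH
  exact ⟨M, ⟨hM.prop, fun K hK hMK => le_antisymm hMK (hM.le_of_ge hK hMK)⟩, hHM⟩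

end Maximal

theorem IsPGroup.exists_normal_card_eq_prime {p : ℕ} [Fact p.Prime] {P : Type*} [Group P]
    [Finite P] [Nontrivial P] (hP : IsPGroup p P) :
    ∃ N : Subgroup P, N.Normal ∧ Nat.card N = p := by
  have : Nontrivial (Subgroup.center P) := hP.center_nontrivial
  have hpZ : p ∣ Nat.card (Subgroup.center P) :=
    (hP.to_subgroup _).card_eq_or_dvd.resolve_left (Finite.one_lt_card_iff_nontrivial.mpr this).ne'
  obtain ⟨z, hz⟩ := exists_prime_orderOf_dvd_card' p hpZ
  refine ⟨Subgroup.zpowers (z : P), ⟨fun n hn g => ?_⟩, ?_⟩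
  · have hnZ : n ∈ Subgroup.center P := Subgroup.zpowers_le.mpr z.2 hn
    rwa [Subgroup.mem_center_iff.mp hnZ g, mul_inv_cancel_right]
  · rw [Nat.card_zpowers, Subgroup.orderOf_coe, hz]

namespace IsCompleteClass

variable {X : GroupClass}

theorem of_subsingleton (hXc : IsCompleteClass X) (P : Type) [Group P] [Subsingleton P] : X P := by
  obtain ⟨⟨G₀, _, _, hG₀⟩, -, -, himage, -⟩ := hXc
  exact himage G₀ P 1 (fun _ => ⟨1, Subsingleton.elim _ _⟩) hG₀

theorem of_card_eq_prime (hXc : IsCompleteClass X) {p : ℕ} (hp : p ∈ piX X) (P : Type) [Group P]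
    [Finite P] (hP : Nat.card P = p) : X P := by
  obtain ⟨-, hiso, hsub, -, -⟩ := hXc
  obtain ⟨hp, G₀, _, _, hG₀, hpG₀⟩ := hp
  have : Fact p.Prime := ⟨hp⟩
  obtain ⟨x, hx⟩ := exists_prime_orderOf_dvd_card' p hpG₀
  have hxp : Nat.card (Subgroup.zpowers x) = p := by rw [Nat.card_zpowers, hx]
  exact hiso _ _ (mulEquivOfPrimeCardEq hxp hP) (hsub G₀ hG₀ _)

theorem of_isPGroup (hXc : IsCompleteClass X) {p : ℕ} (hp : p ∈ piX X) (P : Type) [Group P]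
    [Finite P] (hP : IsPGroup p P) : X P := by
  have : Fact p.Prime := ⟨hp.1⟩
  have hext := hXc.2.2.2.2
  induction hn : Nat.card P using Nat.strong_induction_on generalizing P with
  | _ n ih =>
    rcases subsingleton_or_nontrivial P with _ | _
    · exact hXc.of_subsingleton P
    obtain ⟨N, _, hNp⟩ := hP.exists_normal_card_eq_prime
    have hlt : Nat.card (P ⧸ N) < n := by
      rw [← hn, N.card_eq_card_quotient_mul_card_subgroup, hNp]
      exact lt_mul_of_one_lt_right Nat.card_pos hp.1.one_lt
    exact hext P N (hXc.of_card_eq_prime hp N hNp) (ih _ hlt (P ⧸ N) (hP.to_quotient N) rfl)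

end IsCompleteClass

section Main

variable {X : GroupClass} {G : Type} [Group G] [Finite G]

theorem isHallX_of_kX_eq_one (hXc : IsCompleteClass X) (hk : kX X G = 1) {H : Subgroup G}
    (hH : IsXMaximal X H) : IsHallX X H := by
  refine ⟨hH.1, fun p hp hpH => ?_⟩
  have : Fact p.Prime := ⟨hp.1⟩
  obtain ⟨P⟩ : Nonempty (Sylow p G) := inferInstance
  obtain ⟨M, hM, hPM⟩ := exists_le_isXMaximal (hXc.of_isPGroup hp P P.isPGroup')
  obtain ⟨g, rfl⟩ := ((numClasses_eq_one_iff _).mp hk).2 M hM H hH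
  rw [index_conjSub] at hpH
  exact P.not_dvd_index (hpH.trans (Subgroup.index_dvd_of_le hPM))

theorem setOf_isHallX_eq_setOf_isXMaximal (hmax : ∀ H : Subgroup G, IsXMaximal X H → IsHallX X H) :
    {H : Subgroup G | IsHallX X H} = {H : Subgroup G | IsXMaximal X H} :=
  Set.ext fun H => ⟨IsHallX.isXMaximal, hmax H⟩

end Main

/-- `k_𝔛(G) = 1` iff `h_𝔛(G) = 1` and every `𝔛`-maximal subgroup of `G` is a Hall
`𝔛`-subgroup of `G`. -/
theorem kX_eq_one_iff_hX_eq_one_and_max_eq_hall (X : GroupClass) (hXc : IsCompleteClass X)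
    (G : Type) [Group G] [Finite G] :
    kX X G = 1 ↔
      (hX X G = 1 ∧ ∀ H : Subgroup G, IsXMaximal X H → IsHallX X H) := by
  constructor
  · intro hk
    have hmax : ∀ H : Subgroup G, IsXMaximal X H → IsHallX X H :=
      fun H => isHallX_of_kX_eq_one hXc hk
    refine ⟨?_, hmax⟩
    rwa [hX, setOf_isHallX_eq_setOf_isXMaximal hmax]
  · rintro ⟨hh, hmax⟩
    rwa [kX, ← setOf_isHallX_eq_setOf_isXMaximal hmax]
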